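/- arXiv:2008.11926 — 2 statements merged into one kernel-verified Lean document; each statement's English description precedes it below -/
import Mathlib

section
/- Let G be a compact Hausdorff topological group acting continuously on a Hausdorff topological space M, let H be a subgroup of G, and let p ∈ M. Then the orbit of p under the topological closure of H equals the topological closure in M of the orbit of p under H: O_{cl(H)}(p) = cl(O_H(p)). -/
theorem MulAction.orbit_subgroup_eq_image {G α : Type*} [Group G] [MulAction G α]
    (H : Subgroup G) (a : α) : orbit H a = (· • a) '' (H : Set G) :=
  Set.range_comp (· • a) Subtype.val |>.trans (congrArg _ Subtype.range_coe)

theorem stmt_2_general {G : Type*} [Group G] [TopologicalSpace G] [IsTopologicalGroup G]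
    [CompactSpace G]
    {M : Type*} [TopologicalSpace M] [T2Space M] [MulAction G M] [ContinuousSMul G M]
    (H : Subgroup G) (p : M) :
    MulAction.orbit H.topologicalClosure p = closure (MulAction.orbit H p) := by
  rw [MulAction.orbit_subgroup_eq_image, MulAction.orbit_subgroup_eq_image]
  -- the orbit map `g ↦ g • p` on the compact set `closure ↑H` commutes with closure
  exact image_closure_of_isCompact isClosed_closure.isCompact
    (continuous_id.smul continuous_const).continuousOn

/-- For a continuous action of a compact Hausdorff topological group `G` on a
Hausdorff space `M`, a subgroup `H ≤ G` and `p ∈ M`, the orbit of `p` under the closure of `H`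
equals the closure of the orbit of `p` under `H`. -/
theorem stmt_2 {G : Type*} [Group G] [TopologicalSpace G] [IsTopologicalGroup G]
    [CompactSpace G] [T2Space G]
    {M : Type*} [TopologicalSpace M] [T2Space M] [MulAction G M] [ContinuousSMul G M]
    (H : Subgroup G) (p : M) :
    MulAction.orbit H.topologicalClosure p = closure (MulAction.orbit H p) :=
  stmt_2_general H p
end

section
/- Let G be a compact Hausdorff topological group acting continuously on a Hausdorff topological space M, and let H be a subgroup of G. If some point p ∈ M has H-orbit dense in M, then the topological closure of H acts transitively on M; in particular the orbit of p under cl(H) is all of M. -/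
/-!
The orbit map `g ↦ g • p` is continuous, so it sends the compact group `cl(H)` onto a compact,
hence closed, subset of the Hausdorff space `M`. This closed orbit contains the dense orbit
`H • p`, so it is all of `M`, and an action with one full orbit is transitive.
-/

namespace MulAction

variable {G M : Type*} [Group G] [MulAction G M]

theorem orbit_subgroup_mono {H K : Subgroup G} (hHK : H ≤ K) (p : M) :
    orbit H p ⊆ orbit K p := by
  rintro _ ⟨⟨g, hg⟩, rfl⟩
  exact ⟨⟨g, hHK hg⟩, rfl⟩

variable [TopologicalSpace G] [TopologicalSpace M] [ContinuousSMul G M]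

theorem isClosed_orbit_of_isCompact [T2Space M] {K : Subgroup G} (hK : IsCompact (K : Set G))
    (p : M) : IsClosed (orbit K p) :=
  have : CompactSpace K := isCompact_iff_compactSpace.mp hK
  (isCompact_range (by fun_prop : Continuous fun g : K => g • p)).isClosed

theorem orbit_eq_univ_of_dense_of_le [T2Space M] {H K : Subgroup G} (hHK : H ≤ K)
    (hK : IsCompact (K : Set G)) {p : M} (hdense : Dense (orbit H p)) : orbit K p = Set.univ :=
  (isClosed_orbit_of_isCompact hK p).closure_eq ▸
    Set.eq_univ_of_univ_subset (hdense.closure_eq ▸ closure_mono (orbit_subgroup_mono hHK p))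

end MulAction

theorem stmt_8_general {G : Type*} [Group G] [TopologicalSpace G] [IsTopologicalGroup G]
    [CompactSpace G]
    {M : Type*} [TopologicalSpace M] [T2Space M] [MulAction G M] [ContinuousSMul G M]
    (H : Subgroup G) (p : M)
    (hdense : Dense (MulAction.orbit H p)) :
    (∀ x y : M, ∃ g ∈ H.topologicalClosure, g • x = y) ∧
      MulAction.orbit H.topologicalClosure p = Set.univ := by
  have horbit : MulAction.orbit H.topologicalClosure p = Set.univ :=
    MulAction.orbit_eq_univ_of_dense_of_le H.le_topologicalClosure
      H.isClosed_topologicalClosure.isCompact hdense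
  have : MulAction.IsPretransitive H.topologicalClosure M :=
    (MulAction.isPretransitive_iff_orbit_eq_univ p).mpr horbit
  refine ⟨fun x y => ?_, horbit⟩
  obtain ⟨g, hg⟩ := MulAction.exists_smul_eq H.topologicalClosure x y
  exact ⟨g, g.2, hg⟩

/-- For a continuous action of a compact Hausdorff topological group `G` on a
Hausdorff space `M` and a subgroup `H ≤ G`: if the `H`-orbit of some point `p` is dense in
`M`, then the closure of `H` acts transitively on `M`; in particular the orbit of `p` under
`cl(H)` is all of `M`. -/
theorem stmt_8 {G : Type*} [Group G] [TopologicalSpace G] [IsTopologicalGroup G]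
    [CompactSpace G] [T2Space G]
    {M : Type*} [TopologicalSpace M] [T2Space M] [MulAction G M] [ContinuousSMul G M]
    (H : Subgroup G) (p : M)
    (hdense : Dense (MulAction.orbit H p)) :
    (∀ x y : M, ∃ g ∈ H.topologicalClosure, g • x = y) ∧
      MulAction.orbit H.topologicalClosure p = Set.univ :=
  stmt_8_general H p hdense
end
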